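/- Let a, b : ℕ → ℂ satisfy a(m) ≪_ε m^ε and b(m) ≪_ε m^ε for every ε > 0, and suppose that for every ε > 0, Σ_{p ≤ e^x} |a(p²) − b(p²)|² (log p)/p ≪_ε exp(ε x / log x) for all x ≥ 2. Then for every ε > 0, uniformly in real μ ≥ 3, L ≥ 3 and T ≥ 1, ∫_T^{2T} | Σ_p (a(p²) − b(p²)) p^{−1−2it} g_μ(2 (log p)/L) log p |² dt ≪_ε T + exp(ε L / log L), where the sum is over primes p (the sum is finite since g_μ is supported in [−1, 1], so only p ≤ e^{L/2} contribute). -/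

import Mathlib

open Complex MeasureTheory Real Filter
open scoped ENNReal NNReal ENat

noncomputable section

/-- The function `g_μ`: a normalized multiple of `(1-x²)^{μ-1/2}` on `[-1,1]`. -/
def gmu (μ : ℝ) (x : ℝ) : ℝ :=
  if |x| ≤ 1 then
    2 ^ (2 * μ) * Real.Gamma (μ + 1) ^ 2 / (π * Real.sqrt μ * Real.Gamma (2 * μ + 1))
      * (1 - x ^ 2) ^ (μ - 1 / 2)
  else 0

/-- The Fourier transform `h_μ(t) = ∫ g_μ(x) e^{ixt} dx`. -/
def hmu (μ : ℝ) (t : ℝ) : ℂ :=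
  ∫ x : ℝ, (gmu μ x : ℂ) * Complex.exp (x * t * Complex.I)

/-- The constant `C_μ = Γ(μ+1) 2^μ / √μ`. -/
def Cmu (μ : ℝ) : ℝ := Real.Gamma (μ + 1) * 2 ^ μ / Real.sqrt μ

/-- `E_μ(T) = C_μ / T + 1`. -/
def Emu (μ T : ℝ) : ℝ := Cmu μ / T + 1

/-- `∑_{p ≤ e^x} |a(p²) − b(p²)|² (log p)/p`, the sum running over primes. -/
def primeSquareSum (a b : ℕ → ℂ) (x : ℝ) : ℝ :=
  ∑ p ∈ (Finset.range (⌈Real.exp x⌉₊ + 1)).filter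
      (fun p => Nat.Prime p ∧ (p : ℝ) ≤ Real.exp x),
    ‖a (p ^ 2) - b (p ^ 2)‖ ^ 2 * Real.log p / p

open scoped Classical in
/-- The weighted Dirichlet polynomial `∑_p (a(p²) − b(p²)) p^{−1−2it} g_μ(2 log p / L) log p`;
since `g_μ` is supported in `[−1,1]` only the primes `p ≤ e^{L/2}` contribute. -/
def primeDirichletPoly (a b : ℕ → ℂ) (μ L t : ℝ) : ℂ :=
  ∑' p : ℕ, if Nat.Prime p then
      (a (p ^ 2) - b (p ^ 2)) * (p : ℂ) ^ (-(1 : ℂ) - 2 * Complex.I * (t : ℂ))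
        * (gmu μ (2 * Real.log p / L) : ℂ) * (Real.log p : ℂ)
    else 0

/-!
Only primes `p ≤ e^{L/2}` contribute, so the polynomial is an exponential sum
`∑_p w_p e^{-2it log p}` with `|w_p| ≤ |a(p²) - b(p²)| (log p)/p`, because `0 ≤ g_μ ≤ 1`
(log-convexity of `Γ` bounds the normalising constant). Expanding the square and integrating
termwise, the diagonal contributes `T ∑ |w_p|²`, which is `O(T)` by the Ramanujan bound, and the
pair `p ≠ q` contributes at most `|w_p| |w_q| / |log p - log q|`. As
`1 / (q |log p - log q|) ≤ 1/q + 1/|p - q|`, harmonic sums and a Schur test bound the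
off-diagonal part by `O(L²) ∑_{p ≤ e^L} |a(p²) - b(p²)|² (log p)/p`, and
`L² ≪_ε exp(ε L / (2 log L))` absorbs the factor `L²`.
-/

open ComplexConjugate

lemma norm_integral_exp_mul_I_le_sub {a b : ℝ} (hab : a ≤ b) (θ : ℝ) :
    ‖∫ t in a..b, Complex.exp (θ * t * I)‖ ≤ b - a := by
  have h := intervalIntegral.norm_integral_le_of_norm_le_const (C := 1)
    (f := fun t : ℝ => Complex.exp (θ * t * I)) (a := a) (b := b)
    fun t _ => by rw [← ofReal_mul, Complex.norm_exp_ofReal_mul_I]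
  simpa [abs_of_nonneg (sub_nonneg.2 hab)] using h

lemma norm_integral_exp_mul_I_le_two_div (a b : ℝ) {θ : ℝ} (hθ : θ ≠ 0) :
    ‖∫ t in a..b, Complex.exp (θ * t * I)‖ ≤ 2 / |θ| := by
  have hθI : (θ : ℂ) * I ≠ 0 := mul_ne_zero (ofReal_ne_zero.2 hθ) I_ne_zero
  have hnorm : ∀ x : ℝ, ‖Complex.exp (θ * I * x)‖ = 1 := fun x => by
    rw [mul_right_comm, ← ofReal_mul, Complex.norm_exp_ofReal_mul_I]
  simp_rw [mul_right_comm _ _ I]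
  rw [integral_exp_mul_complex hθI, norm_div, norm_mul, Complex.norm_real, Complex.norm_I,
    mul_one, Real.norm_eq_abs]
  gcongr
  calc _ ≤ ‖Complex.exp (θ * I * b)‖ + ‖Complex.exp (θ * I * a)‖ := norm_sub_le _ _
    _ = 2 := by rw [hnorm, hnorm]; norm_num

section ExponentialSum

variable {ι : Type*}

lemma norm_sum_exp_sq_eq (s : Finset ι) (d : ι → ℂ) (θ : ι → ℝ) (t : ℝ) :
    ((‖∑ i ∈ s, d i * Complex.exp (θ i * t * I)‖ ^ 2 : ℝ) : ℂ) =
      ∑ i ∈ s, ∑ j ∈ s, d i * conj (d j) * Complex.exp ((θ i - θ j : ℝ) * t * I) := by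
  rw [ofReal_pow, ← Complex.mul_conj', map_sum, Finset.sum_mul_sum]
  refine Finset.sum_congr rfl fun i _ => Finset.sum_congr rfl fun j _ => ?_
  rw [map_mul, ← Complex.exp_conj, mul_mul_mul_comm, ← Complex.exp_add]
  simp only [map_mul, Complex.conj_ofReal, Complex.conj_I]
  push_cast
  ring_nf

lemma integral_norm_sum_exp_sq_le (s : Finset ι) (d : ι → ℂ) (θ : ι → ℝ) {a b : ℝ}
    (hab : a ≤ b) :
    ∫ t in a..b, ‖∑ i ∈ s, d i * Complex.exp (θ i * t * I)‖ ^ 2 ≤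
      ∑ i ∈ s, ∑ j ∈ s,
        ‖d i‖ * ‖d j‖ * ‖∫ t in a..b, Complex.exp ((θ i - θ j : ℝ) * t * I)‖ := by
  have hcont : ∀ i j, Continuous fun t : ℝ =>
      d i * conj (d j) * Complex.exp ((θ i - θ j : ℝ) * t * I) := fun i j => by fun_prop
  have hcast : ((∫ t in a..b, ‖∑ i ∈ s, d i * Complex.exp (θ i * t * I)‖ ^ 2 : ℝ) : ℂ) =
      ∑ i ∈ s, ∑ j ∈ s,
        d i * conj (d j) * ∫ t in a..b, Complex.exp ((θ i - θ j : ℝ) * t * I) := by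
    simp_rw [← intervalIntegral.integral_ofReal, norm_sum_exp_sq_eq]
    rw [intervalIntegral.integral_finsetSum fun i _ =>
      (continuous_finsetSum _ fun j _ => hcont i j).intervalIntegrable _ _]
    refine Finset.sum_congr rfl fun i _ => ?_
    rw [intervalIntegral.integral_finsetSum fun j _ => (hcont i j).intervalIntegrable _ _]
    simp_rw [intervalIntegral.integral_const_mul]
  have hnonneg : 0 ≤ ∫ t in a..b, ‖∑ i ∈ s, d i * Complex.exp (θ i * t * I)‖ ^ 2 :=
    intervalIntegral.integral_nonneg hab fun _ _ => by positivity
  rw [← Real.norm_of_nonneg hnonneg, ← Complex.norm_real, hcast]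
  refine (norm_sum_le _ _).trans (Finset.sum_le_sum fun i _ => (norm_sum_le _ _).trans ?_)
  simp only [norm_mul, RCLike.norm_conj, le_refl]

variable [DecidableEq ι]

lemma integral_norm_sum_exp_sq_le_diag_add (s : Finset ι) (d : ι → ℂ) {θ : ι → ℝ}
    (hθ : Set.InjOn θ s) {a b : ℝ} (hab : a ≤ b) :
    ∫ t in a..b, ‖∑ i ∈ s, d i * Complex.exp (θ i * t * I)‖ ^ 2 ≤
      (b - a) * ∑ i ∈ s, ‖d i‖ ^ 2 +
        ∑ i ∈ s, ∑ j ∈ s.erase i, 2 * ‖d i‖ * ‖d j‖ / |θ i - θ j| := by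
  refine (integral_norm_sum_exp_sq_le s d θ hab).trans ?_
  rw [Finset.mul_sum, ← Finset.sum_add_distrib]
  gcongr with i hi
  rw [← Finset.add_sum_erase s _ hi]
  refine add_le_add ?_ (Finset.sum_le_sum fun j hj => ?_)
  · calc ‖d i‖ * ‖d i‖ * ‖∫ t in a..b, Complex.exp ((θ i - θ i : ℝ) * t * I)‖
        ≤ ‖d i‖ * ‖d i‖ * (b - a) := by gcongr; exact norm_integral_exp_mul_I_le_sub hab _
      _ = (b - a) * ‖d i‖ ^ 2 := by ring
  · have hne : θ i - θ j ≠ 0 :=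
      sub_ne_zero.2 fun h =>
        Finset.ne_of_mem_erase hj (hθ (Finset.mem_of_mem_erase hj) hi h.symm)
    calc ‖d i‖ * ‖d j‖ * ‖∫ t in a..b, Complex.exp ((θ i - θ j : ℝ) * t * I)‖
        ≤ ‖d i‖ * ‖d j‖ * (2 / |θ i - θ j|) := by
          gcongr; exact norm_integral_exp_mul_I_le_two_div a b hne
      _ = 2 * ‖d i‖ * ‖d j‖ / |θ i - θ j| := by ring

lemma sum_sum_erase_comm (s : Finset ι) (f : ι → ι → ℝ) :
    ∑ i ∈ s, ∑ j ∈ s.erase i, f i j = ∑ i ∈ s, ∑ j ∈ s.erase i, f j i :=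
  Finset.sum_comm' fun i j => by
    simp only [Finset.mem_erase]
    tauto

lemma sum_sum_erase_mul_mul_le (s : Finset ι) (x : ι → ℝ) {K : ι → ι → ℝ}
    (hK : ∀ i j, K i j = K j i) (hK0 : ∀ i ∈ s, ∀ j ∈ s, 0 ≤ K i j) :
    ∑ i ∈ s, ∑ j ∈ s.erase i, x i * x j * K i j ≤
      ∑ i ∈ s, x i ^ 2 * ∑ j ∈ s.erase i, K i j := by
  have hswap : ∑ i ∈ s, ∑ j ∈ s.erase i, x j ^ 2 * K i j =
      ∑ i ∈ s, ∑ j ∈ s.erase i, x i ^ 2 * K i j := by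
    rw [sum_sum_erase_comm]
    simp_rw [hK]
  have hamgm : ∑ i ∈ s, ∑ j ∈ s.erase i, 2 * (x i * x j * K i j) ≤
      ∑ i ∈ s, ∑ j ∈ s.erase i, (x i ^ 2 * K i j + x j ^ 2 * K i j) := by
    gcongr with i hi j hj
    have := hK0 i hi j (Finset.mem_of_mem_erase hj)
    nlinarith [sq_nonneg (x i - x j)]
  simp_rw [← Finset.mul_sum, Finset.sum_add_distrib, hswap] at hamgm
  simp_rw [Finset.mul_sum]
  linarith

end ExponentialSum

lemma sum_inv_comp_le_one_add_log {s : Finset ℕ} {N : ℕ} {f : ℕ → ℕ} (hf : Set.InjOn f s)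
    (hfs : ∀ q ∈ s, 1 ≤ f q ∧ f q ≤ N) :
    ∑ q ∈ s, ((f q : ℝ))⁻¹ ≤ 1 + Real.log N := by
  rw [← Finset.sum_image (f := fun k : ℕ => (k : ℝ)⁻¹) hf]
  calc ∑ k ∈ s.image f, (k : ℝ)⁻¹ ≤ ∑ k ∈ Finset.Icc 1 N, (k : ℝ)⁻¹ := by
        refine Finset.sum_le_sum_of_subset_of_nonneg (fun k hk => ?_) fun _ _ _ => by positivity
        obtain ⟨q, hq, rfl⟩ := Finset.mem_image.1 hk
        exact Finset.mem_Icc.2 (hfs q hq)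
    _ = harmonic N := by simp [harmonic_eq_sum_Icc]
    _ ≤ 1 + Real.log N := harmonic_le_one_add_log N

lemma sum_erase_inv_abs_sub_le {s : Finset ℕ} {N : ℕ} (hs : ∀ q ∈ s, 1 ≤ q ∧ q ≤ N)
    {p : ℕ} (hp : p ∈ s) : ∑ q ∈ s.erase p, |(p : ℝ) - q|⁻¹ ≤ 2 * (1 + Real.log N) := by
  rw [← Finset.sum_filter_add_sum_filter_not _ (· < p), two_mul]
  have hpN := (hs p hp).2
  have hmem : ∀ {P : ℕ → Prop} [DecidablePred P] {q}, q ∈ (s.erase p).filter P →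
      q ≠ p ∧ q ∈ s ∧ P q := fun hq => by
    obtain ⟨hq, hP⟩ := Finset.mem_filter.1 hq
    exact ⟨Finset.ne_of_mem_erase hq, Finset.mem_of_mem_erase hq, hP⟩
  gcongr
  · calc _ = ∑ q ∈ (s.erase p).filter (· < p), (((p - q : ℕ) : ℝ))⁻¹ :=
          Finset.sum_congr rfl fun q hq => by
            have hqp : q < p := (hmem hq).2.2
            rw [abs_of_pos (sub_pos.2 (by exact_mod_cast hqp)), Nat.cast_sub hqp.le]
      _ ≤ _ := sum_inv_comp_le_one_add_log
          (fun q hq r hr h => by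
            have := (hmem hq).2.2; have := (hmem hr).2.2
            omega)
          fun q hq => by have := (hmem hq).2.2; omega
  · calc _ = ∑ q ∈ (s.erase p).filter (¬ · < p), (((q - p : ℕ) : ℝ))⁻¹ :=
          Finset.sum_congr rfl fun q hq => by
            obtain ⟨hqp, -, hpq⟩ := hmem hq
            have hpq : p < q := by omega
            rw [abs_sub_comm, abs_of_pos (sub_pos.2 (by exact_mod_cast hpq)),
              Nat.cast_sub hpq.le]
      _ ≤ _ := sum_inv_comp_le_one_add_log
          (fun q hq r hr h => by
            have := (hmem hq).2.2; have := (hmem hr).2.2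
            omega)
          fun q hq => by
            obtain ⟨hqp, hqs, hpq⟩ := hmem hq
            have := (hs q hqs).2
            omega

lemma abs_sub_le_max_mul_abs_log_sub_log {x y : ℝ} (hx : 0 < x) (hy : 0 < y) :
    |x - y| ≤ max x y * |Real.log x - Real.log y| := by
  wlog hxy : x ≤ y generalizing x y
  · rw [abs_sub_comm, max_comm, abs_sub_comm (Real.log x)]
    exact this hy hx (le_of_not_ge hxy)
  have h := Real.one_sub_inv_le_log_of_pos (div_pos hy hx)
  rw [inv_div, Real.log_div hy.ne' hx.ne'] at h
  rw [abs_sub_comm, abs_of_nonneg (sub_nonneg.2 hxy), max_eq_right hxy, abs_sub_comm,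
    abs_of_nonneg (sub_nonneg.2 (Real.log_le_log hx hxy))]
  have : y * (1 - x / y) = y - x := by field_simp
  nlinarith

lemma inv_div_abs_log_sub_log_le {x y : ℝ} (hx : 0 < x) (hy : 0 < y) (hxy : x ≠ y) :
    y⁻¹ / |Real.log x - Real.log y| ≤ y⁻¹ + |x - y|⁻¹ := by
  have hgap := abs_sub_le_max_mul_abs_log_sub_log hx hy
  have hd : 0 < |x - y| := abs_pos.2 (sub_ne_zero.2 hxy)
  have hlog : 0 < |Real.log x - Real.log y| := (abs_nonneg _).lt_of_ne fun h => by
    rw [← h, mul_zero] at hgap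
    linarith
  have hmax : max x y ≤ y + |x - y| := max_le (by linarith [le_abs_self (x - y)]) (by linarith)
  rw [div_le_iff₀ hlog, add_mul, inv_mul_eq_div, inv_mul_eq_div, div_add_div _ _ hy.ne' hd.ne',
    le_div_iff₀ (mul_pos hy hd), inv_mul_eq_div, mul_div_cancel_left₀ _ hy.ne']
  nlinarith

lemma sum_erase_log_div_div_abs_log_sub_le {s : Finset ℕ} {N : ℕ}
    (hs : ∀ q ∈ s, 1 ≤ q ∧ q ≤ N) {p : ℕ} (hp : p ∈ s) :
    ∑ q ∈ s.erase p, Real.log q / q / |Real.log p - Real.log q| ≤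
      3 * Real.log N * (1 + Real.log N) := by
  have hs' : ∀ q ∈ s.erase p, 1 ≤ q ∧ q ≤ N := fun q hq =>
    hs q (Finset.mem_of_mem_erase hq)
  have hlogN : 0 ≤ Real.log N := Real.log_natCast_nonneg N
  calc ∑ q ∈ s.erase p, Real.log q / q / |Real.log p - Real.log q|
      ≤ ∑ q ∈ s.erase p, Real.log N * ((q : ℝ)⁻¹ + |(p : ℝ) - q|⁻¹) := by
        gcongr with q hq
        obtain ⟨hq1, hqN⟩ := hs' q hq
        have hq0 : (0 : ℝ) < q := by exact_mod_cast hq1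
        have hp0 : (0 : ℝ) < p := by exact_mod_cast (hs p hp).1
        rw [div_eq_mul_inv (Real.log q), mul_div_assoc]
        exact mul_le_mul (Real.log_le_log hq0 (by exact_mod_cast hqN))
          (inv_div_abs_log_sub_log_le hp0 hq0
            (by exact_mod_cast (Finset.ne_of_mem_erase hq).symm))
          (by positivity) hlogN
    _ = Real.log N *
          (∑ q ∈ s.erase p, (q : ℝ)⁻¹ + ∑ q ∈ s.erase p, |(p : ℝ) - q|⁻¹) := by
        rw [← Finset.sum_add_distrib, Finset.mul_sum]
    _ ≤ Real.log N * ((1 + Real.log N) + 2 * (1 + Real.log N)) := by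
        gcongr
        · exact sum_inv_comp_le_one_add_log (f := id) (Set.injOn_id _) hs'
        · exact sum_erase_inv_abs_sub_le hs hp
    _ = 3 * Real.log N * (1 + Real.log N) := by ring

lemma Real.Gamma_add_half_le_Gamma_mul_sqrt {s : ℝ} (hs : 0 < s) :
    Real.Gamma (s + 1 / 2) ≤ Real.Gamma s * √s := by
  have h := Real.Gamma_mul_add_mul_le_rpow_Gamma_mul_rpow_Gamma hs (by linarith : 0 < s + 1)
    (by norm_num : (0 : ℝ) < 1 / 2) (by norm_num : (0 : ℝ) < 1 / 2) (by norm_num)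
  have hG := Real.Gamma_pos_of_pos hs
  rw [Real.Gamma_add_one hs.ne', ← Real.sqrt_eq_rpow, ← Real.sqrt_eq_rpow,
    ← Real.sqrt_mul hG.le, show Real.Gamma s * (s * Real.Gamma s) = Real.Gamma s ^ 2 * s by ring,
    Real.sqrt_mul (sq_nonneg _), Real.sqrt_sq hG.le] at h
  convert h using 2
  ring

lemma gmu_normalization_le_one {μ : ℝ} (hμ : 1 / 4 ≤ μ) :
    2 ^ (2 * μ) * Real.Gamma (μ + 1) ^ 2 / (π * √μ * Real.Gamma (2 * μ + 1)) ≤ 1 := by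
  have hΓ1 := Real.Gamma_pos_of_pos (by linarith : 0 < μ + 1)
  have hΓh := Real.Gamma_pos_of_pos (by linarith : 0 < μ + 1 / 2)
  have hA : (0 : ℝ) < 2 ^ (2 * μ) := by positivity
  have hπ : √π * √π = π := Real.mul_self_sqrt Real.pi_pos.le
  have hsqπ : 0 < √π := Real.sqrt_pos.2 Real.pi_pos
  have hdup : Real.Gamma (2 * μ + 1) * √π =
      2 ^ (2 * μ) * Real.Gamma (μ + 1 / 2) * Real.Gamma (μ + 1) := by
    have h := Real.Gamma_mul_Gamma_add_half (μ + 1 / 2)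
    rw [show μ + 1 / 2 + 1 / 2 = μ + 1 by ring, show 2 * (μ + 1 / 2) = 2 * μ + 1 by ring,
      show (1 : ℝ) - (2 * μ + 1) = -(2 * μ) by ring, Real.rpow_neg zero_le_two] at h
    calc Real.Gamma (2 * μ + 1) * √π
        = 2 ^ (2 * μ) * (Real.Gamma (2 * μ + 1) * (2 ^ (2 * μ))⁻¹ * √π) := by field_simp
      _ = _ := by rw [← h]; ring
  have hΓ : Real.Gamma (μ + 1) ≤ √π * √μ * Real.Gamma (μ + 1 / 2) := by
    have hsq : √(μ + 1 / 2) ≤ √π * √μ := by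
      rw [← Real.sqrt_mul Real.pi_pos.le]
      exact Real.sqrt_le_sqrt (by nlinarith [Real.pi_gt_three])
    calc Real.Gamma (μ + 1) = Real.Gamma (μ + 1 / 2 + 1 / 2) := by ring_nf
      _ ≤ Real.Gamma (μ + 1 / 2) * √(μ + 1 / 2) :=
        Real.Gamma_add_half_le_Gamma_mul_sqrt (by linarith)
      _ ≤ √π * √μ * Real.Gamma (μ + 1 / 2) := by nlinarith
  rw [div_le_one (by have := Real.sqrt_pos.2 (by linarith : 0 < μ); positivity)]
  have : 2 ^ (2 * μ) * Real.Gamma (μ + 1) ^ 2 * √π ≤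
      π * √μ * Real.Gamma (2 * μ + 1) * √π :=
    calc 2 ^ (2 * μ) * Real.Gamma (μ + 1) ^ 2 * √π
        = (2 ^ (2 * μ) * Real.Gamma (μ + 1) * √π) * Real.Gamma (μ + 1) := by ring
      _ ≤ (2 ^ (2 * μ) * Real.Gamma (μ + 1) * √π) *
            (√π * √μ * Real.Gamma (μ + 1 / 2)) := by
        gcongr
      _ = (√π * √π) * √μ * (2 ^ (2 * μ) * Real.Gamma (μ + 1 / 2) * Real.Gamma (μ + 1)) := by
          ring
      _ = π * √μ * Real.Gamma (2 * μ + 1) * √π := by rw [hπ, ← hdup]; ring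
  exact le_of_mul_le_mul_right this hsqπ

lemma abs_gmu_le_one {μ : ℝ} (hμ : 1 / 2 ≤ μ) (x : ℝ) : |gmu μ x| ≤ 1 := by
  unfold gmu
  split_ifs with hx
  · have hx2 : x ^ 2 ≤ 1 := by rw [← sq_abs]; nlinarith [abs_nonneg x]
    have hΓ1 := Real.Gamma_pos_of_pos (by linarith : 0 < μ + 1)
    have hΓ2 := Real.Gamma_pos_of_pos (by linarith : 0 < 2 * μ + 1)
    have := Real.sqrt_pos.2 (by linarith : 0 < μ)
    have := Real.pi_pos
    rw [abs_of_nonneg (by positivity)]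
    exact mul_le_one₀ (gmu_normalization_le_one (by linarith)) (by positivity)
      (Real.rpow_le_one (by linarith) (by nlinarith) (by linarith))
  · simp

lemma sq_mul_exp_le {ε L : ℝ} (hε : 0 < ε) (hL : 1 < L) :
    L ^ 2 * Real.exp (ε / 2 * L / Real.log L) ≤
      Real.exp (12 / ε) * Real.exp (ε * L / Real.log L) := by
  have hv : 0 < Real.log L := Real.log_pos hL
  have hcube : Real.log L ^ 3 / 6 ≤ L := by
    simpa [Real.exp_log (by linarith : 0 < L), Nat.factorial] using
      Real.pow_div_factorial_le_exp _ hv.le 3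
  have hquad : ε * Real.log L ^ 2 / 12 ≤ ε / 2 * L / Real.log L := by
    rw [le_div_iff₀ hv]; nlinarith
  have hlin : 2 * Real.log L ≤ 12 / ε + ε * Real.log L ^ 2 / 12 := by
    have : 0 ≤ (ε * Real.log L - 12) ^ 2 / (12 * ε) := by positivity
    have h : (ε * Real.log L - 12) ^ 2 / (12 * ε) =
        12 / ε + ε * Real.log L ^ 2 / 12 - 2 * Real.log L := by
      field_simp; ring
    linarith
  have hsplit : ε * L / Real.log L = 2 * (ε / 2 * L / Real.log L) := by ring
  calc L ^ 2 * Real.exp (ε / 2 * L / Real.log L)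
      = Real.exp (2 * Real.log L + ε / 2 * L / Real.log L) := by
        rw [Real.exp_add, ← Real.log_rpow (by linarith), Real.exp_log (by positivity)]; norm_cast
    _ ≤ Real.exp (12 / ε + ε * L / Real.log L) := Real.exp_le_exp.2 (by linarith)
    _ = Real.exp (12 / ε) * Real.exp (ε * L / Real.log L) := Real.exp_add _ _

def primesLE (X : ℝ) : Finset ℕ :=
  (Finset.range (⌈X⌉₊ + 1)).filter fun p => Nat.Prime p ∧ (p : ℝ) ≤ X

lemma mem_primesLE {X : ℝ} {p : ℕ} : p ∈ primesLE X ↔ p.Prime ∧ (p : ℝ) ≤ X := by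
  simp only [primesLE, Finset.mem_filter, Finset.mem_range, and_iff_right_iff_imp, and_imp]
  exact fun _ hp => Nat.lt_succ_of_le (Nat.cast_le.1 (hp.trans (Nat.le_ceil X)))

lemma primesLE_mono {X Y : ℝ} (h : X ≤ Y) : primesLE X ⊆ primesLE Y := fun _ hp =>
  mem_primesLE.2 ⟨(mem_primesLE.1 hp).1, (mem_primesLE.1 hp).2.trans h⟩

lemma primeSquareSum_eq (a b : ℕ → ℂ) (x : ℝ) :
    primeSquareSum a b x =
      ∑ p ∈ primesLE (Real.exp x), ‖a (p ^ 2) - b (p ^ 2)‖ ^ 2 * Real.log p / p :=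
  rfl

lemma primeSquareSum_nonneg (a b : ℕ → ℂ) (x : ℝ) : 0 ≤ primeSquareSum a b x :=
  Finset.sum_nonneg fun p _ => by positivity

lemma one_le_and_le_floor_of_mem_primesLE {X : ℝ} {p : ℕ} (hp : p ∈ primesLE X) :
    1 ≤ p ∧ p ≤ ⌊X⌋₊ :=
  ⟨(mem_primesLE.1 hp).1.one_le, Nat.le_floor (mem_primesLE.1 hp).2⟩

lemma natCast_cpow_neg_one_sub {n : ℕ} (hn : 0 < n) (t : ℝ) :
    (n : ℂ) ^ (-1 - 2 * I * t) =
      ((n : ℝ)⁻¹ : ℝ) * Complex.exp ((-2 * Real.log n : ℝ) * t * I) := by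
  rw [Complex.cpow_def_of_ne_zero (by exact_mod_cast hn.ne'), ← Complex.natCast_log,
    show (Real.log n : ℂ) * (-1 - 2 * I * t) =
      -(Real.log n : ℂ) + (-2 * Real.log n : ℝ) * t * I by push_cast; ring,
    Complex.exp_add, ← ofReal_neg, ← ofReal_exp, Real.exp_neg,
    Real.exp_log (by exact_mod_cast hn)]

def dirichletCoeff (a b : ℕ → ℂ) (μ L : ℝ) (p : ℕ) : ℂ :=
  (a (p ^ 2) - b (p ^ 2)) * gmu μ (2 * Real.log p / L) * (Real.log p / p : ℝ)

lemma gmu_eq_zero_of_one_lt_abs {μ x : ℝ} (hx : 1 < |x|) : gmu μ x = 0 := by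
  simp [gmu, not_le.2 hx]

lemma primeDirichletPoly_eq_sum (a b : ℕ → ℂ) (μ : ℝ) {L : ℝ} (hL : 0 < L) (t : ℝ) :
    primeDirichletPoly a b μ L t = ∑ p ∈ primesLE (Real.exp (L / 2)),
      dirichletCoeff a b μ L p * Complex.exp ((-2 * Real.log p : ℝ) * t * I) := by
  unfold primeDirichletPoly
  rw [tsum_eq_sum fun p hp => ?_]
  · refine Finset.sum_congr rfl fun p hp => ?_
    have hprime := (mem_primesLE.1 hp).1
    rw [if_pos hprime, natCast_cpow_neg_one_sub hprime.pos, dirichletCoeff]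
    push_cast
    ring
  · split_ifs with hprime
    · have hgt : Real.exp (L / 2) < p := lt_of_not_ge fun h => hp (mem_primesLE.2 ⟨hprime, h⟩)
      have hlog : L / 2 < Real.log p :=
        (Real.lt_log_iff_exp_lt (by exact_mod_cast hprime.pos)).2 hgt
      have hgt1 : 1 < 2 * Real.log p / L := (one_lt_div hL).2 (by linarith)
      rw [gmu_eq_zero_of_one_lt_abs (hgt1.trans_le (le_abs_self _))]
      simp
    · rfl

lemma norm_dirichletCoeff_le (a b : ℕ → ℂ) {μ : ℝ} (hμ : 1 / 2 ≤ μ) (L : ℝ) {p : ℕ}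
    (hp : 1 ≤ p) :
    ‖dirichletCoeff a b μ L p‖ ≤ ‖a (p ^ 2) - b (p ^ 2)‖ * (Real.log p / p) := by
  have hW : 0 ≤ Real.log p / p := div_nonneg (Real.log_natCast_nonneg p) (Nat.cast_nonneg p)
  rw [dirichletCoeff, norm_mul, norm_mul, Complex.norm_real, Complex.norm_real, Real.norm_eq_abs,
    Real.norm_eq_abs, abs_of_nonneg hW]
  gcongr
  exact mul_le_of_le_one_right (norm_nonneg _) (abs_gmu_le_one hμ _)

lemma sum_sum_erase_norm_mul_norm_div_abs_log_sub_log_le {s : Finset ℕ} {N : ℕ}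
    (hs : ∀ q ∈ s, 1 ≤ q ∧ q ≤ N) (w c : ℕ → ℂ)
    (hw : ∀ p ∈ s, ‖w p‖ ≤ ‖c p‖ * (Real.log p / p)) :
    ∑ p ∈ s, ∑ q ∈ s.erase p, ‖w p‖ * ‖w q‖ / |Real.log p - Real.log q| ≤
      3 * Real.log N * (1 + Real.log N) * ∑ p ∈ s, ‖c p‖ ^ 2 * (Real.log p / p) := by
  set W : ℕ → ℝ := fun p => Real.log p / p
  have hW : ∀ p, 0 ≤ W p := fun p => div_nonneg (Real.log_natCast_nonneg p) (Nat.cast_nonneg p)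
  set K : ℕ → ℕ → ℝ := fun p q => W p * W q / |Real.log p - Real.log q|
  calc ∑ p ∈ s, ∑ q ∈ s.erase p, ‖w p‖ * ‖w q‖ / |Real.log p - Real.log q|
      ≤ ∑ p ∈ s, ∑ q ∈ s.erase p, ‖c p‖ * ‖c q‖ * K p q := by
        refine Finset.sum_le_sum fun p hp => Finset.sum_le_sum fun q hq => ?_
        rw [← mul_div_assoc]
        refine div_le_div_of_nonneg_right ?_ (abs_nonneg _)
        calc ‖w p‖ * ‖w q‖ ≤ (‖c p‖ * W p) * (‖c q‖ * W q) :=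
              mul_le_mul (hw p hp) (hw q (Finset.mem_of_mem_erase hq)) (norm_nonneg _)
                (mul_nonneg (norm_nonneg _) (hW p))
          _ = ‖c p‖ * ‖c q‖ * (W p * W q) := by ring
    _ ≤ ∑ p ∈ s, ‖c p‖ ^ 2 * ∑ q ∈ s.erase p, K p q :=
        sum_sum_erase_mul_mul_le s (fun p => ‖c p‖)
          (fun p q => by simp only [K, mul_comm (W p), abs_sub_comm (Real.log p)])
          fun p _ q _ => div_nonneg (mul_nonneg (hW p) (hW q)) (abs_nonneg _)
    _ = ∑ p ∈ s, ‖c p‖ ^ 2 * W p *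
          ∑ q ∈ s.erase p, W q / |Real.log p - Real.log q| := by
        simp only [K, mul_assoc, Finset.mul_sum, mul_div_assoc]
    _ ≤ ∑ p ∈ s, ‖c p‖ ^ 2 * W p * (3 * Real.log N * (1 + Real.log N)) := by
        gcongr with p hp
        exact sum_erase_log_div_div_abs_log_sub_le hs hp
    _ = 3 * Real.log N * (1 + Real.log N) * ∑ p ∈ s, ‖c p‖ ^ 2 * W p := by
        rw [Finset.mul_sum]
        exact Finset.sum_congr rfl fun p _ => by ring

lemma rpow_quarter_mul_log_div_le {x : ℝ} (hx : 0 < x) :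
    x ^ (1 / 4 : ℝ) * (Real.log x / x) ≤ 8 * x ^ (-5 / 8 : ℝ) := by
  have hlog : Real.log x ≤ x ^ (1 / 8 : ℝ) / (1 / 8) := Real.log_le_rpow_div hx.le (by norm_num)
  calc x ^ (1 / 4 : ℝ) * (Real.log x / x)
      ≤ x ^ (1 / 4 : ℝ) * (x ^ (1 / 8 : ℝ) / (1 / 8) / x) := by
        gcongr
    _ = 8 * (x ^ (1 / 4 : ℝ) * x ^ (1 / 8 : ℝ) * x ^ (-1 : ℝ)) := by
        rw [Real.rpow_neg_one]; ring
    _ = 8 * x ^ (-5 / 8 : ℝ) := by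
        rw [← Real.rpow_add hx, ← Real.rpow_add hx]; norm_num

lemma norm_sub_apply_sq_le_rpow {a b : ℕ → ℂ} {Ca Cb : ℝ}
    (ha : ∀ m : ℕ, 1 ≤ m → ‖a m‖ ≤ Ca * (m : ℝ) ^ (1 / 8 : ℝ))
    (hb : ∀ m : ℕ, 1 ≤ m → ‖b m‖ ≤ Cb * (m : ℝ) ^ (1 / 8 : ℝ)) {p : ℕ}
    (hp : 1 ≤ p) :
    ‖a (p ^ 2) - b (p ^ 2)‖ ≤ (Ca + Cb) * (p : ℝ) ^ (1 / 4 : ℝ) := by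
  have hp2 : 1 ≤ p ^ 2 := Nat.one_le_pow _ _ hp
  have hpow : ((p ^ 2 : ℕ) : ℝ) ^ (1 / 8 : ℝ) = (p : ℝ) ^ (1 / 4 : ℝ) := by
    rw [Nat.cast_pow, ← Real.rpow_natCast_mul (Nat.cast_nonneg p)]; norm_num
  calc ‖a (p ^ 2) - b (p ^ 2)‖ ≤ ‖a (p ^ 2)‖ + ‖b (p ^ 2)‖ := norm_sub_le _ _
    _ ≤ Ca * (p : ℝ) ^ (1 / 4 : ℝ) + Cb * (p : ℝ) ^ (1 / 4 : ℝ) := by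
        rw [← hpow]; exact add_le_add (ha _ hp2) (hb _ hp2)
    _ = (Ca + Cb) * (p : ℝ) ^ (1 / 4 : ℝ) := by ring

lemma sum_norm_dirichletCoeff_sq_le (a b : ℕ → ℂ) {μ : ℝ} (hμ : 1 / 2 ≤ μ) (L : ℝ)
    {C : ℝ} (hC : ∀ p : ℕ, 1 ≤ p → ‖a (p ^ 2) - b (p ^ 2)‖ ≤ C * (p : ℝ) ^ (1 / 4 : ℝ))
    {s : Finset ℕ} (hs : ∀ p ∈ s, 1 ≤ p) :
    ∑ p ∈ s, ‖dirichletCoeff a b μ L p‖ ^ 2 ≤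
      64 * C ^ 2 * ∑' n : ℕ, (n : ℝ) ^ (-5 / 4 : ℝ) := by
  have hC0 : 0 ≤ C := by simpa using (norm_nonneg _).trans (hC 1 le_rfl)
  have hsum : Summable fun n : ℕ => (n : ℝ) ^ (-5 / 4 : ℝ) :=
    Real.summable_nat_rpow.2 (by norm_num)
  have hterm : ∀ p ∈ s,
      ‖dirichletCoeff a b μ L p‖ ^ 2 ≤ 64 * C ^ 2 * (p : ℝ) ^ (-5 / 4 : ℝ) := by
    intro p hp
    have hp0 : (0 : ℝ) < p := by exact_mod_cast hs p hp
    have hnorm : ‖dirichletCoeff a b μ L p‖ ≤ 8 * C * (p : ℝ) ^ (-5 / 8 : ℝ) :=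
      calc ‖dirichletCoeff a b μ L p‖ ≤ ‖a (p ^ 2) - b (p ^ 2)‖ * (Real.log p / p) :=
            norm_dirichletCoeff_le a b hμ L (hs p hp)
        _ ≤ C * (p : ℝ) ^ (1 / 4 : ℝ) * (Real.log p / p) := by
            gcongr
            exact hC p (hs p hp)
        _ ≤ C * (8 * (p : ℝ) ^ (-5 / 8 : ℝ)) := by
            rw [mul_assoc]; exact mul_le_mul_of_nonneg_left (rpow_quarter_mul_log_div_le hp0) hC0
        _ = 8 * C * (p : ℝ) ^ (-5 / 8 : ℝ) := by ring
    calc ‖dirichletCoeff a b μ L p‖ ^ 2 ≤ (8 * C * (p : ℝ) ^ (-5 / 8 : ℝ)) ^ 2 := by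
          gcongr
      _ = 64 * C ^ 2 * (p : ℝ) ^ (-5 / 4 : ℝ) := by
          rw [mul_pow, mul_pow, ← Real.rpow_natCast ((p : ℝ) ^ _) 2, ← Real.rpow_mul hp0.le]
          norm_num
  calc ∑ p ∈ s, ‖dirichletCoeff a b μ L p‖ ^ 2
      ≤ ∑ p ∈ s, 64 * C ^ 2 * (p : ℝ) ^ (-5 / 4 : ℝ) :=
        Finset.sum_le_sum hterm
    _ ≤ 64 * C ^ 2 * ∑' n : ℕ, (n : ℝ) ^ (-5 / 4 : ℝ) := by
        rw [← Finset.mul_sum]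
        gcongr
        exact hsum.sum_le_tsum s fun n _ => by positivity

lemma sum_sum_erase_dirichletCoeff_le (a b : ℕ → ℂ) {μ L : ℝ} (hμ : 1 / 2 ≤ μ) (hL : 0 < L) :
    ∑ p ∈ primesLE (Real.exp (L / 2)), ∑ q ∈ (primesLE (Real.exp (L / 2))).erase p,
        2 * ‖dirichletCoeff a b μ L p‖ * ‖dirichletCoeff a b μ L q‖ /
          |-2 * Real.log p - -2 * Real.log q| ≤
      L * (L + 2) * primeSquareSum a b L := by
  set N := ⌊Real.exp (L / 2)⌋₊
  have hS : ∀ q ∈ primesLE (Real.exp (L / 2)), 1 ≤ q ∧ q ≤ N := fun q hq =>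
    one_le_and_le_floor_of_mem_primesLE hq
  have hlogN : Real.log N ≤ L / 2 := by
    have hN : (0 : ℝ) < N := by
      exact_mod_cast Nat.one_le_floor_iff _ |>.2 (Real.one_le_exp (by linarith))
    exact (Real.log_le_iff_le_exp hN).2 (Nat.floor_le (Real.exp_pos _).le)
  have hlog0 : 0 ≤ Real.log N := Real.log_natCast_nonneg N
  have hterm : ∀ p q : ℕ,
      2 * ‖dirichletCoeff a b μ L p‖ * ‖dirichletCoeff a b μ L q‖ /
        |-2 * Real.log p - -2 * Real.log q| =
      ‖dirichletCoeff a b μ L p‖ * ‖dirichletCoeff a b μ L q‖ / |Real.log p - Real.log q| :=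
    fun p q => by
      rw [show -2 * Real.log p - -2 * Real.log q = 2 * (Real.log q - Real.log p) by ring,
        abs_mul, abs_two, abs_sub_comm, mul_assoc, mul_div_mul_left _ _ two_ne_zero]
  have hsub : ∑ p ∈ primesLE (Real.exp (L / 2)),
      ‖a (p ^ 2) - b (p ^ 2)‖ ^ 2 * (Real.log p / p) ≤ primeSquareSum a b L := by
    rw [primeSquareSum_eq]
    simp_rw [← mul_div_assoc]
    exact Finset.sum_le_sum_of_subset_of_nonneg
      (primesLE_mono (Real.exp_le_exp.2 (by linarith))) fun p _ _ => by positivity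
  simp only [hterm]
  refine (sum_sum_erase_norm_mul_norm_div_abs_log_sub_log_le hS _
    (fun p => a (p ^ 2) - b (p ^ 2)) fun p hp =>
      norm_dirichletCoeff_le a b hμ L (hS p hp).1).trans ?_
  exact mul_le_mul (by nlinarith) hsub (by positivity) (by positivity)

lemma integral_norm_primeDirichletPoly_sq_le (a b : ℕ → ℂ) {μ L T : ℝ} (hμ : 1 / 2 ≤ μ)
    (hL : 0 < L) (hT : 0 ≤ T) :
    ∫ t in T..(2 * T), ‖primeDirichletPoly a b μ L t‖ ^ 2 ≤
      T * ∑ p ∈ primesLE (Real.exp (L / 2)), ‖dirichletCoeff a b μ L p‖ ^ 2 +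
        L * (L + 2) * primeSquareSum a b L := by
  have hθ : Set.InjOn (fun p : ℕ => -2 * Real.log p) (primesLE (Real.exp (L / 2))) :=
    fun p hp q hq h => by
      have hpos : ∀ r ∈ primesLE (Real.exp (L / 2)), (r : ℝ) ∈ Set.Ioi 0 := fun r hr =>
        Set.mem_Ioi.2 (by exact_mod_cast (mem_primesLE.1 hr).1.pos)
      exact_mod_cast Real.log_injOn_pos (hpos p hp) (hpos q hq) (by simpa using h)
  simp_rw [primeDirichletPoly_eq_sum a b μ hL]
  refine (integral_norm_sum_exp_sq_le_diag_add _ _ hθ (by linarith)).trans ?_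
  rw [show 2 * T - T = T by ring]
  exact (add_le_add_iff_left _).2 (sum_sum_erase_dirichletCoeff_le a b hμ hL)

/-- Under the Ramanujan hypothesis for `a, b` and the hypothesis
`∑_{p ≤ e^x} |a(p²) − b(p²)|² (log p)/p ≪_ε exp(ε x / log x)`, one has the mean value
bound `∫_T^{2T} |∑_p (a(p²) − b(p²)) p^{−1−2it} g_μ(2 log p / L) log p|² dt
≪_ε T + exp(ε L / log L)`, uniformly in `μ ≥ 3`, `L ≥ 3`, `T ≥ 1`. -/
theorem mean_value_bound (a b : ℕ → ℂ)
    (ha : ∀ ε : ℝ, 0 < ε → ∃ C : ℝ, ∀ m : ℕ, 1 ≤ m →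
      ‖a m‖ ≤ C * (m : ℝ) ^ ε)
    (hb : ∀ ε : ℝ, 0 < ε → ∃ C : ℝ, ∀ m : ℕ, 1 ≤ m →
      ‖b m‖ ≤ C * (m : ℝ) ^ ε)
    (hsq : ∀ ε : ℝ, 0 < ε → ∃ K : ℝ, ∀ x : ℝ, 2 ≤ x →
      primeSquareSum a b x ≤ K * Real.exp (ε * x / Real.log x)) :
    ∀ ε : ℝ, 0 < ε → ∃ K : ℝ, ∀ μ L T : ℝ, 3 ≤ μ → 3 ≤ L → 1 ≤ T →
      (∫ t in T..(2 * T), ‖primeDirichletPoly a b μ L t‖ ^ 2)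
        ≤ K * (T + Real.exp (ε * L / Real.log L)) := by
  intro ε hε
  obtain ⟨Ca, hCa⟩ := ha (1 / 8) (by norm_num)
  obtain ⟨Cb, hCb⟩ := hb (1 / 8) (by norm_num)
  obtain ⟨K, hK⟩ := hsq (ε / 2) (by positivity)
  have hK0 : 0 ≤ K := nonneg_of_mul_nonneg_left
    ((primeSquareSum_nonneg a b 2).trans (hK 2 le_rfl)) (Real.exp_pos _)
  set A := 64 * (Ca + Cb) ^ 2 * ∑' n : ℕ, (n : ℝ) ^ (-5 / 4 : ℝ)
  have hA : 0 ≤ A := by positivity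
  refine ⟨A + 2 * K * Real.exp (12 / ε), fun μ L T hμ hL hT => ?_⟩
  have hdiag : ∑ p ∈ primesLE (Real.exp (L / 2)), ‖dirichletCoeff a b μ L p‖ ^ 2 ≤ A :=
    sum_norm_dirichletCoeff_sq_le a b (by linarith) L
      (fun p hp => norm_sub_apply_sq_le_rpow hCa hCb hp)
      fun p hp => (one_le_and_le_floor_of_mem_primesLE hp).1
  calc ∫ t in T..(2 * T), ‖primeDirichletPoly a b μ L t‖ ^ 2
      ≤ T * ∑ p ∈ primesLE (Real.exp (L / 2)), ‖dirichletCoeff a b μ L p‖ ^ 2 +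
          L * (L + 2) * primeSquareSum a b L :=
        integral_norm_primeDirichletPoly_sq_le a b (by linarith) (by linarith) (by linarith)
    _ ≤ T * A + 2 * L ^ 2 * (K * Real.exp (ε / 2 * L / Real.log L)) := by
        gcongr ?_ + ?_
        · exact mul_le_mul_of_nonneg_left hdiag (by linarith)
        · exact mul_le_mul (by nlinarith) (hK L (by linarith)) (primeSquareSum_nonneg a b L)
            (by positivity)
    _ = T * A + 2 * K * (L ^ 2 * Real.exp (ε / 2 * L / Real.log L)) := by ring
    _ ≤ T * A + 2 * K * (Real.exp (12 / ε) * Real.exp (ε * L / Real.log L)) :=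
        (add_le_add_iff_left _).2
          (mul_le_mul_of_nonneg_left (sq_mul_exp_le hε (by linarith)) (by positivity))
    _ ≤ (A + 2 * K * Real.exp (12 / ε)) * (T + Real.exp (ε * L / Real.log L)) := by
        have : 0 ≤ 2 * K * Real.exp (12 / ε) * T := by positivity
        have : 0 ≤ A * Real.exp (ε * L / Real.log L) := by positivity
        nlinarith

end
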